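/- Let A ∈ ASM(n) and let u ∈ S_n be a Grassmannian permutation with its unique descent at position d. If r_A(d,j) ≤ r_u(d,j) for all j = 1, ..., n, then u ≤ A in the order on ASM(n), i.e. r_A(i,j) ≤ r_u(i,j) for all 1 ≤ i,j ≤ n. -/

import Mathlib

/-- The entry of an `n × n` integer matrix in 1-based coordinates;
`0` outside the grid `[1,n] × [1,n]`. -/
def entry1 {n : ℕ} (A : Matrix (Fin n) (Fin n) ℤ) (i j : ℕ) : ℤ :=
  if h : 1 ≤ i ∧ i ≤ n ∧ 1 ≤ j ∧ j ≤ n then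
    A ⟨i - 1, by omega⟩ ⟨j - 1, by omega⟩ else 0

/-- The corner sum `r_A(i,j) = ∑_{k ≤ i} ∑_{l ≤ j} a_{k l}` (1-based). -/
def cornerSum {n : ℕ} (A : Matrix (Fin n) (Fin n) ℤ) (i j : ℕ) : ℤ :=
  ∑ k ∈ Finset.Icc 1 i, ∑ l ∈ Finset.Icc 1 j, entry1 A k l

/-- Partial row sum `∑_{l=1}^{j} a_{i l}`. -/
def rowPartial {n : ℕ} (A : Matrix (Fin n) (Fin n) ℤ) (i j : ℕ) : ℤ :=
  ∑ l ∈ Finset.Icc 1 j, entry1 A i l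

/-- Partial column sum `∑_{k=1}^{i} a_{k j}`. -/
def colPartial {n : ℕ} (A : Matrix (Fin n) (Fin n) ℤ) (i j : ℕ) : ℤ :=
  ∑ k ∈ Finset.Icc 1 i, entry1 A k j

/-- `A` is an alternating sign matrix: every partial row and column sum is `0`
or `1`, and every full row and column sums to `1`. -/
def IsASM {n : ℕ} (A : Matrix (Fin n) (Fin n) ℤ) : Prop :=
  (∀ i j : ℕ, rowPartial A i j = 0 ∨ rowPartial A i j = 1) ∧
  (∀ i j : ℕ, colPartial A i j = 0 ∨ colPartial A i j = 1) ∧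
  (∀ i : ℕ, 1 ≤ i → i ≤ n → rowPartial A i n = 1) ∧
  (∀ j : ℕ, 1 ≤ j → j ≤ n → colPartial A n j = 1)

/-- `A` is a partial alternating sign matrix: every partial row and column sum
is `0` or `1`. -/
def IsPartialASM {n : ℕ} (A : Matrix (Fin n) (Fin n) ℤ) : Prop :=
  (∀ i j : ℕ, rowPartial A i j = 0 ∨ rowPartial A i j = 1) ∧
  (∀ i j : ℕ, colPartial A i j = 0 ∨ colPartial A i j = 1)

/-- `(i,j)` (1-based) is in the Rothe diagram `D(A)`:
`∑_{k > i, l > j} a_{i l} a_{k j} = 1`. -/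
def InDiagram {n : ℕ} (A : Matrix (Fin n) (Fin n) ℤ) (i j : ℕ) : Prop :=
  (∑ k ∈ Finset.Icc 1 n, ∑ l ∈ Finset.Icc 1 n,
    (if i < k ∧ j < l then entry1 A i l * entry1 A k j else 0)) = 1

/-- `(i,j)` is in the essential set `Ess(A)`. -/
def InEss {n : ℕ} (A : Matrix (Fin n) (Fin n) ℤ) (i j : ℕ) : Prop :=
  InDiagram A i j ∧ ¬ InDiagram A (i + 1) j ∧ ¬ InDiagram A i (j + 1)

/-- The permutation matrix of `w` (a `1` in positions `(a, w a)`). -/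
def permMatrix {n : ℕ} (w : Equiv.Perm (Fin n)) : Matrix (Fin n) (Fin n) ℤ :=
  Matrix.of fun a b => if w a = b then 1 else 0

/-- The value `w(a)` of the permutation `w` in 1-based coordinates, extended by
the identity outside `[1,n]`. -/
def pval {n : ℕ} (w : Equiv.Perm (Fin n)) (a : ℕ) : ℕ :=
  if h : 1 ≤ a ∧ a ≤ n then ((w ⟨a - 1, by omega⟩ : Fin n) : ℕ) + 1 else a

/-- The value function (1-based) of the biGrassmannian permutation `[i,j,r]_b`. -/
def biGrFun (i j r a : ℕ) : ℕ :=
  if a ≤ r then a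
  else if a ≤ i then a + (j - r)
  else if a ≤ i + j - r then a - (i - r)
  else a

/-- The permutation matrix of the biGrassmannian permutation `[i,j,r]_b ∈ S_n`. -/
def biGrMatrix (n i j r : ℕ) : Matrix (Fin n) (Fin n) ℤ :=
  Matrix.of fun a b => if biGrFun i j r ((a : ℕ) + 1) = (b : ℕ) + 1 then 1 else 0

/-- `u ∈ S_n` is the biGrassmannian permutation `[i,j,r]_b`, i.e. its values
are given by the defining formula. -/
def IsBiGrPerm (n i j r : ℕ) (u : Equiv.Perm (Fin n)) : Prop :=
  ∀ a : ℕ, 1 ≤ a → a ≤ n → pval u a = biGrFun i j r a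

/-- `(a,b)` (1-based) is in the Rothe diagram of the permutation `w`:
`w(a) > b` and `w⁻¹(b) > a`. -/
def InPermDiagram {n : ℕ} (w : Equiv.Perm (Fin n)) (a b : ℕ) : Prop :=
  1 ≤ a ∧ a ≤ n ∧ 1 ≤ b ∧ b ≤ n ∧ b < pval w a ∧ a < pval w⁻¹ b

/-- `(a,b)` is in the essential set of the permutation `w`. -/
def InPermEss {n : ℕ} (w : Equiv.Perm (Fin n)) (a b : ℕ) : Prop :=
  InPermDiagram w a b ∧ ¬ InPermDiagram w (a + 1) b ∧ ¬ InPermDiagram w a (b + 1)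

/-- `w` has a descent at (1-based) position `d`: `w(d) > w(d+1)`. -/
def HasDescentAt {n : ℕ} (w : Equiv.Perm (Fin n)) (d : ℕ) : Prop :=
  1 ≤ d ∧ d < n ∧ pval w (d + 1) < pval w d

/-- `u` is biGrassmannian: both `u` and `u⁻¹` have a unique descent. -/
def IsBiGrassmannian {n : ℕ} (u : Equiv.Perm (Fin n)) : Prop :=
  (∃! d : ℕ, HasDescentAt u d) ∧ (∃! d : ℕ, HasDescentAt u⁻¹ d)

/-!
Fix `j`. Both `i ↦ r_A(i,j)` and `i ↦ r_u(i,j)` grow by `0` or `1` at each step. Since `u` is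
increasing on `[1,d]` and on `[d+1,n]`, on each of the blocks `[0,d]` and `[d,n]` the function
`r_u(·,j)` goes up by one at each step until it becomes constant, so on a block `[a,b]` it is
`min (r_u(a,j) + (i - a)) (r_u(b,j))`. The function `r_A(·,j)` is bounded by both terms because
the bound holds at the endpoints: `r_A(0,j) = 0`, `r_A(d,j) ≤ r_u(d,j)` by hypothesis, and
`r_A(n,j) ≤ j = r_u(n,j)`.
-/

section

open Finset

variable {n : ℕ}

theorem le_of_endpoints_of_steps {g h : ℕ → ℤ} (hmono : Monotone h)
    (hstep : ∀ k, h (k + 1) ≤ h k + 1) {a b : ℕ}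
    (hg : ∀ k, a ≤ k → k < b → g k < g (k + 1) ∨ g (k + 1) = g b)
    (ha : h a ≤ g a) (hb : h b ≤ g b) {i : ℕ} (hai : a ≤ i) (hib : i ≤ b) : h i ≤ g i := by
  induction i, hai using Nat.le_induction with
  | base => exact ha
  | succ i hai ih =>
    rcases hg i hai (by omega) with hlt | hflat
    · have := ih (by omega)
      have := hstep i
      omega
    · exact hflat ▸ (hmono hib).trans hb

lemma cornerSum_add_sum_Ioc (A : Matrix (Fin n) (Fin n) ℤ) {i i' : ℕ} (h : i ≤ i') (j : ℕ) :
    cornerSum A i j + ∑ k ∈ Ioc i i', rowPartial A k j = cornerSum A i' j := by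
  have hIoc (m : ℕ) : cornerSum A m j = ∑ k ∈ Ioc 0 m, rowPartial A k j := by
    rw [← Icc_add_one_left_eq_Ioc]; rfl
  rw [hIoc, hIoc, sum_Ioc_consecutive _ i.zero_le h]

lemma cornerSum_succ_left (A : Matrix (Fin n) (Fin n) ℤ) (i j : ℕ) :
    cornerSum A (i + 1) j = cornerSum A i j + rowPartial A (i + 1) j :=
  sum_Icc_succ_top (by omega) _

lemma cornerSum_le_right (A : Matrix (Fin n) (Fin n) ℤ) {i : ℕ}
    (hc : ∀ l, colPartial A i l ≤ 1) (j : ℕ) : cornerSum A i j ≤ j := by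
  calc cornerSum A i j = ∑ l ∈ Icc 1 j, colPartial A i l := sum_comm
    _ ≤ ∑ _l ∈ Icc 1 j, 1 := sum_le_sum fun l _ => hc l
    _ = j := by simp

lemma sum_Icc_one_eq_sum_fin {M : Type*} [AddCommMonoid M] (F : ℕ → M) :
    ∑ k ∈ Icc 1 n, F k = ∑ a : Fin n, F (a + 1) := by
  rw [Fin.sum_univ_eq_sum_range (fun a => F (a + 1)), range_eq_Ico, sum_Ico_add',
    Ico_add_one_right_eq_Icc, zero_add]

lemma pval_coe_add_one (u : Equiv.Perm (Fin n)) (a : Fin n) : pval u (a + 1) = u a + 1 := by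
  simp [pval]

lemma sum_Icc_comp_pval {M : Type*} [AddCommMonoid M] (u : Equiv.Perm (Fin n)) (F : ℕ → M) :
    ∑ k ∈ Icc 1 n, F (pval u k) = ∑ k ∈ Icc 1 n, F k := by
  simp only [sum_Icc_one_eq_sum_fin, pval_coe_add_one]
  exact Equiv.sum_comp u (fun b : Fin n => F (b + 1))

lemma entry1_permMatrix (u : Equiv.Perm (Fin n)) {k : ℕ} (hk : 1 ≤ k) (hkn : k ≤ n) (l : ℕ) :
    entry1 (permMatrix u) k l = if l = pval u k then 1 else 0 := by
  obtain ⟨a, rfl⟩ : ∃ a : Fin n, k = a + 1 := ⟨⟨k - 1, by omega⟩, by simp; omega⟩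
  rw [pval_coe_add_one]
  unfold entry1 permMatrix
  split_ifs <;> simp_all [Fin.ext_iff]
  omega

lemma rowPartial_permMatrix (u : Equiv.Perm (Fin n)) {k : ℕ} (hk : 1 ≤ k) (hkn : k ≤ n)
    (j : ℕ) : rowPartial (permMatrix u) k j = if pval u k ≤ j then 1 else 0 := by
  have hpos : 1 ≤ pval u k := by simp [pval, hk, hkn]
  simp [rowPartial, entry1_permMatrix u hk hkn, hpos]

lemma cornerSum_permMatrix_self (u : Equiv.Perm (Fin n)) {j : ℕ} (hj : j ≤ n) :
    cornerSum (permMatrix u) n j = j := by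
  calc cornerSum (permMatrix u) n j
      = ∑ k ∈ Icc 1 n, if pval u k ≤ j then (1 : ℤ) else 0 :=
        sum_congr rfl fun k hk => rowPartial_permMatrix u (mem_Icc.1 hk).1 (mem_Icc.1 hk).2 j
    _ = ∑ k ∈ Icc 1 n, if k ≤ j then (1 : ℤ) else 0 :=
        sum_Icc_comp_pval u fun m => if m ≤ j then (1 : ℤ) else 0
    _ = j := by
      rw [sum_boole, show {k ∈ Icc 1 n | k ≤ j} = Icc 1 j by ext; simp; omega]
      simp

lemma monotoneOn_pval (u : Equiv.Perm (Fin n)) {a b : ℕ} (ha : 1 ≤ a) (hb : b ≤ n)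
    (hu : ∀ c, a ≤ c → c < b → ¬ HasDescentAt u c) : MonotoneOn (pval u) (Set.Icc a b) := by
  refine monotoneOn_of_le_succ Set.ordConnected_Icc fun c _ hc hc' => ?_
  simp only [Order.succ_eq_add_one, Set.mem_Icc] at hc hc' ⊢
  by_contra hlt
  exact hu c hc.1 (by omega) ⟨by omega, by omega, by omega⟩

lemma cornerSum_permMatrix_lt_succ_or_eq (u : Equiv.Perm (Fin n)) {a b : ℕ} (hb : b ≤ n)
    (hu : MonotoneOn (pval u) (Set.Icc (a + 1) b)) (j : ℕ) {k : ℕ} (hak : a ≤ k) (hkb : k < b) :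
    cornerSum (permMatrix u) k j < cornerSum (permMatrix u) (k + 1) j ∨
      cornerSum (permMatrix u) (k + 1) j = cornerSum (permMatrix u) b j := by
  by_cases hkj : pval u (k + 1) ≤ j
  · left
    simp [cornerSum_succ_left, rowPartial_permMatrix u (by omega : 1 ≤ k + 1) (by omega), hkj]
  · right
    rw [← cornerSum_add_sum_Ioc _ (hkb : k + 1 ≤ b), left_eq_add]
    refine sum_eq_zero fun m hm => ?_
    obtain ⟨hkm, hmb⟩ := mem_Ioc.1 hm
    have : pval u (k + 1) ≤ pval u m :=
      hu ⟨by omega, by omega⟩ ⟨by omega, hmb⟩ hkm.le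
    simp [rowPartial_permMatrix u (by omega : 1 ≤ m) (by omega), show ¬ pval u m ≤ j by omega]

end

/-- Let `A ∈ ASM(n)` and let `u ∈ S_n` be a Grassmannian
permutation with its unique descent at position `d`.  If
`r_A(d,j) ≤ r_u(d,j)` for all `j = 1, ..., n`, then `u ≤ A` in the order on
`ASM(n)`, i.e. `r_A(i,j) ≤ r_u(i,j)` for all `1 ≤ i,j ≤ n`. -/
theorem stmt10 {n : ℕ} (A : Matrix (Fin n) (Fin n) ℤ) (hA : IsASM A)
    (u : Equiv.Perm (Fin n)) (d : ℕ) (hd : HasDescentAt u d)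
    (huniq : ∀ a : ℕ, HasDescentAt u a → a = d)
    (hrow : ∀ j : ℕ, 1 ≤ j → j ≤ n →
      cornerSum A d j ≤ cornerSum (permMatrix u) d j) :
    ∀ i j : ℕ, 1 ≤ i → i ≤ n → 1 ≤ j → j ≤ n →
      cornerSum A i j ≤ cornerSum (permMatrix u) i j := by
  intro i j _ hin hj hjn
  obtain ⟨hd, hdn, -⟩ := hd
  obtain ⟨hArow, hAcol, -, -⟩ := hA
  have hAmono : Monotone (cornerSum A · j) := monotone_nat_of_le_succ fun k => by
    rw [cornerSum_succ_left]; rcases hArow (k + 1) j with h | h <;> omega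
  have hAstep (k : ℕ) : cornerSum A (k + 1) j ≤ cornerSum A k j + 1 := by
    rw [cornerSum_succ_left]; rcases hArow (k + 1) j with h | h <;> omega
  rcases le_or_gt i d with hid | hdi
  · have hu : MonotoneOn (pval u) (Set.Icc 1 d) :=
      monotoneOn_pval u le_rfl hdn.le fun c _ hcd hc => (huniq c hc ▸ hcd).false
    exact le_of_endpoints_of_steps hAmono hAstep
      (fun k hk hkd => cornerSum_permMatrix_lt_succ_or_eq u hdn.le hu j hk hkd)
      (by simp [cornerSum]) (hrow j hj hjn) i.zero_le hid
  · have hu : MonotoneOn (pval u) (Set.Icc (d + 1) n) :=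
      monotoneOn_pval u (by omega) le_rfl fun c hdc _ hc => by have := huniq c hc; omega
    refine le_of_endpoints_of_steps hAmono hAstep
      (fun k hk hkn => cornerSum_permMatrix_lt_succ_or_eq u le_rfl hu j hk hkn)
      (hrow j hj hjn) ?_ hdi.le hin
    rw [cornerSum_permMatrix_self u hjn]
    exact cornerSum_le_right A (fun l => by rcases hAcol n l with h | h <;> omega) j
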